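/- Let γ ∈ ℤ^d be a vector such that for all p, q ∈ ℕ^d with p + q - γ componentwise nonnegative, either p - γ or q - γ is componentwise nonnegative. Then γ has at most one entry equal to 1 among its positive entries; more precisely, γ cannot have two distinct coordinates i ≠ j with γ i = γ j = 1. -/

import Mathlib

theorem exists_split_not_dominating {ι : Type*} [DecidableEq ι] (γ : ι → ℤ) {i j : ι}
    (hij : i ≠ j) (hi : 0 < γ i) (hj : γ j = 1) :
    ∃ p q : ι → ℕ, (∀ k, γ k ≤ p k + q k) ∧ (p j : ℤ) < γ j ∧ (q i : ℤ) < γ i := by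
  refine ⟨Function.update (fun k => (γ k).toNat) j 0, Pi.single j 1, fun k => ?_, ?_, ?_⟩
  · rcases eq_or_ne k j with rfl | hk
    · simp [hj]
    · simp [hk]
  · simp [hj]
  · simp [hij, hi]

theorem stmt_2 {d : ℕ} (γ : Fin d → ℤ)
    (h : ∀ p q : Fin d → ℕ, (∀ i, 0 ≤ (p i : ℤ) + q i - γ i) →
      (∀ i, 0 ≤ (p i : ℤ) - γ i) ∨ (∀ i, 0 ≤ (q i : ℤ) - γ i)) :
    ¬ ∃ i j, i ≠ j ∧ γ i = 1 ∧ γ j = 1 := by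
  rintro ⟨i, j, hij, hi, hj⟩
  obtain ⟨p, q, hsum, hpj, hqi⟩ := exists_split_not_dominating γ hij (by omega) hj
  rcases h p q fun k => sub_nonneg.2 (hsum k) with hp | hq
  · exact absurd (hp j) (by omega)
  · exact absurd (hq i) (by omega)
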